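/- If x is almost even and x ≠ a, then x does not end in ab, ba, or bb; equivalently, its last two letters are aa. -/
import Mathlib


inductive Letter : Type
  | a | b
deriving DecidableEq

open Letter

def alpha (x : List Letter) : ℕ := x.count Letter.a
def beta (x : List Letter) : ℕ := x.count Letter.b

/-- x is "almost even": nonempty, α(x) = β(x)+1, and every proper prefix u has α(u) ≤ β(u). -/
def AE (x : List Letter) : Prop :=
  x ≠ [] ∧ alpha x = beta x + 1 ∧ ∀ u : List Letter, u <+: x → u ≠ x → alpha u ≤ beta u

theorem stmt16 (x : List Letter) (hx : AE x) (hxa : x ≠ [Letter.a]) :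
    ¬ [Letter.a, Letter.b] <:+ x ∧ ¬ [Letter.b, Letter.a] <:+ x ∧ ¬ [Letter.b, Letter.b] <:+ x ∧
    [Letter.a, Letter.a] <:+ x := by
  obtain ⟨hne, hcount, hpre⟩ := hx
  obtain ⟨l, c, rfl⟩ := (List.eq_nil_or_concat x).resolve_left hne
  have hc : c = Letter.a := by
    cases c with
    | a => rfl
    | b =>
      exfalso
      have h1 := hpre l (List.prefix_concat _ _) (by simp)
      simp [alpha, beta, List.count_append] at hcount h1
      omega
  subst hc
  have hl : l ≠ [] := by rintro rfl; exact hxa rfl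
  obtain ⟨m, d, rfl⟩ := (List.eq_nil_or_concat l).resolve_left hl
  have hd : d = Letter.a := by
    cases d with
    | a => rfl
    | b =>
      exfalso
      have h1 := hpre m ((List.prefix_concat _ _).trans (List.prefix_concat _ _)) (by simp)
      simp [alpha, beta, List.count_append] at hcount h1
      omega
  subst hd
  have key : ∀ p q : Letter, [p, q] <:+ (m ++ [Letter.a]) ++ [Letter.a] →
      p = Letter.a ∧ q = Letter.a := by
    rintro p q ⟨t, ht⟩
    have ht' : t ++ [p, q] = m ++ [Letter.a, Letter.a] := by
      simpa [List.append_assoc] using ht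
    have := List.append_inj_right' ht' (by rfl)
    simp at this
    exact this
  refine ⟨?_, ?_, ?_, ⟨m, by simp⟩⟩
  · intro h; have := key _ _ (by simpa using h); simp at this
  · intro h; have := key _ _ (by simpa using h); simp at this
  · intro h; have := key _ _ (by simpa using h); simp at this
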